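/- arXiv:2510.22923 — 7 statements merged into one kernel-verified Lean document; each statement's English description precedes it below -/
import Mathlib

section
/- Under assumptions (I)–(III), the sd×sd matrix B := (I_d ⊗ a₀²²)·H⁻¹ is symmetric positive definite, and consequently the (m+sd)×(m+sd) block-diagonal matrix A₀ := diag{a₀, B} is symmetric positive definite. -/
/-!
The lower-right blocks of the positive semidefinite matrix in (II) form a principal submatrix,
and because the first `m - s` rows of every `D_{jk}` vanish it equals `G = K H` with
`K = I_d ⊗ a₀²²`. Here `K` is positive definite (as `a₀²²` is a principal submatrix of `a₀`) and
`H` is invertible, so `G` is invertible and hence positive definite. Then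
`B = K H⁻¹ = K G⁻¹ K` is a congruence of `G⁻¹`, so it is positive definite, and so is the block
diagonal `diag{a₀, B}`.
-/

open Matrix

open scoped Kronecker ComplexOrder

namespace Matrix

variable {ι m n 𝕜 : Type*} [Fintype ι] [Fintype m] [Fintype n] [DecidableEq ι]

lemma one_kronecker_mul_of_blocks {R : Type*} [Semiring R] (A : Matrix n n R)
    (M : ι → ι → Matrix n n R) :
    (1 ⊗ₖ A) * of (fun x y : ι × n => M x.1 y.1 x.2 y.2) =
      of fun x y : ι × n => (A * M x.1 y.1) x.2 y.2 := by
  ext ⟨j, i⟩ ⟨k, l⟩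
  simp [mul_apply, Fintype.sum_prod_type, one_apply, Finset.sum_ite_eq]

lemma fromBlocks_mul_fromBlocks_zero_zero_inr_inr {R : Type*} [Semiring R]
    (A₁₁ : Matrix m m R) (A₁₂ : Matrix m n R) (A₂₁ : Matrix n m R) (A₂₂ : Matrix n n R)
    (C : Matrix n m R) (D : Matrix n n R) (i j : n) :
    (fromBlocks A₁₁ A₁₂ A₂₁ A₂₂ * fromBlocks 0 0 C D : Matrix (m ⊕ n) (m ⊕ n) R)
      (.inr i) (.inr j) = (A₂₂ * D) i j := by
  simp [fromBlocks_multiply]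

variable [DecidableEq m] [DecidableEq n] [RCLike 𝕜]

lemma PosDef.fromBlocks_zero_zero {A : Matrix m m 𝕜} {D : Matrix n n 𝕜}
    (hA : A.PosDef) (hD : D.PosDef) : (fromBlocks A 0 0 D).PosDef := by
  have := hA.isUnit.invertible
  have hpsd : (fromBlocks A 0 0 D).PosSemidef := by
    simpa using (PosDef.fromBlocks₁₁ (0 : Matrix m n 𝕜) D hA).2 (by simpa using hD.posSemidef)
  rw [hpsd.posDef_iff_det_ne_zero, det_fromBlocks_zero₂₁]
  exact mul_ne_zero hA.det_pos.ne' hD.det_pos.ne'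

lemma posDef_mul_inv_of_posSemidef_mul {K H : Matrix n n 𝕜} (hK : K.PosDef)
    (hKH : (K * H).PosSemidef) (hH : IsUnit H.det) : (K * H⁻¹).PosDef := by
  have hG : (K * H).PosDef := by
    rw [hKH.posDef_iff_det_ne_zero, det_mul]
    exact mul_ne_zero hK.det_pos.ne' hH.ne_zero
  have hKunit : IsUnit K := hK.isUnit
  have hHinv : H⁻¹ = (K * H)⁻¹ * K := by
    rw [mul_inv_rev, Matrix.mul_assoc, nonsing_inv_mul _ ((isUnit_iff_isUnit_det K).1 hKunit),
      Matrix.mul_one]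
  rw [hHinv, ← Matrix.mul_assoc]
  nth_rewrite 1 [← hK.isHermitian.eq]
  exact (IsUnit.posDef_star_left_conjugate_iff hKunit).2 hG.inv

end Matrix

theorem stmt_0_general (p s d : ℕ)
    (a11 : Matrix (Fin p) (Fin p) ℝ) (a12 : Matrix (Fin p) (Fin s) ℝ)
    (a21 : Matrix (Fin s) (Fin p) ℝ) (a22 : Matrix (Fin s) (Fin s) ℝ)
    (D21 : Fin d → Fin d → Matrix (Fin s) (Fin p) ℝ)
    (D22 : Fin d → Fin d → Matrix (Fin s) (Fin s) ℝ)
    (a₀ : Matrix (Fin p ⊕ Fin s) (Fin p ⊕ Fin s) ℝ)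
    (ha₀ : a₀ = fromBlocks a11 a12 a21 a22)
    (D : Fin d → Fin d → Matrix (Fin p ⊕ Fin s) (Fin p ⊕ Fin s) ℝ)
    (hD : ∀ j k, D j k = fromBlocks 0 0 (D21 j k) (D22 j k))
    (hpd : a₀.PosDef)
    -- (II): the md × md block matrix with (j,k) block a₀ ⬝ D_{jk} is symmetric PSD
    (hII : (Matrix.of fun (x y : Fin d × (Fin p ⊕ Fin s)) =>
      (a₀ * D x.1 y.1) x.2 y.2).PosSemidef)
    -- (III): the sd × sd block matrix H with (j,k) block D_{jk}²² is invertible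
    (H : Matrix (Fin d × Fin s) (Fin d × Fin s) ℝ)
    (hH : H = Matrix.of fun (x y : Fin d × Fin s) => D22 x.1 y.1 x.2 y.2)
    (hIII : IsUnit H.det)
    (B : Matrix (Fin d × Fin s) (Fin d × Fin s) ℝ)
    (hB : B = (kroneckerMap (· * ·) (1 : Matrix (Fin d) (Fin d) ℝ) a22) * H⁻¹) :
    B.PosDef ∧ (fromBlocks a₀ 0 0 B).PosDef := by
  have ha22 : a22.PosDef := by
    have : a₀.submatrix Sum.inr Sum.inr = a22 := by rw [ha₀]; rfl
    exact this ▸ hpd.submatrix Sum.inr_injective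
  have hKH : ((1 : Matrix (Fin d) (Fin d) ℝ) ⊗ₖ a22 * H).PosSemidef := by
    convert hII.submatrix (Prod.map id Sum.inr) using 1
    ext x y
    simp [hH, one_kronecker_mul_of_blocks, ha₀, hD, fromBlocks_mul_fromBlocks_zero_zero_inr_inr]
  have hBpd : B.PosDef :=
    hB ▸ posDef_mul_inv_of_posSemidef_mul (PosDef.one.kronecker ha22) hKH hIII
  exact ⟨hBpd, hpd.fromBlocks_zero_zero hBpd⟩

/-- Theorem 4.1(a): under assumptions (I)–(III), `B = (I_d ⊗ a₀²²) * H⁻¹` is symmetric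
positive definite, and hence `A₀ = diag{a₀, B}` is symmetric positive definite.
Here `m = p + s` with `p = m - s ≥ 1`, and the `m`-dimensional index is `Fin p ⊕ Fin s`. -/
theorem stmt_0 (p s d : ℕ) (hp : 1 ≤ p) (hs : 1 ≤ s) (hd : 1 ≤ d)
    (a : Fin d → Matrix (Fin p ⊕ Fin s) (Fin p ⊕ Fin s) ℝ)
    (a11 : Matrix (Fin p) (Fin p) ℝ) (a12 : Matrix (Fin p) (Fin s) ℝ)
    (a21 : Matrix (Fin s) (Fin p) ℝ) (a22 : Matrix (Fin s) (Fin s) ℝ)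
    (D21 : Fin d → Fin d → Matrix (Fin s) (Fin p) ℝ)
    (D22 : Fin d → Fin d → Matrix (Fin s) (Fin s) ℝ)
    (a₀ : Matrix (Fin p ⊕ Fin s) (Fin p ⊕ Fin s) ℝ)
    (ha₀ : a₀ = fromBlocks a11 a12 a21 a22)
    (D : Fin d → Fin d → Matrix (Fin p ⊕ Fin s) (Fin p ⊕ Fin s) ℝ)
    (hD : ∀ j k, D j k = fromBlocks 0 0 (D21 j k) (D22 j k))
    (hpd : a₀.PosDef)
    -- (I): a₀ ⬝ a_j is symmetric
    (hI : ∀ j, (a₀ * a j).IsSymm)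
    -- (II): the md × md block matrix with (j,k) block a₀ ⬝ D_{jk} is symmetric PSD
    (hII : (Matrix.of fun (x y : Fin d × (Fin p ⊕ Fin s)) =>
      (a₀ * D x.1 y.1) x.2 y.2).PosSemidef)
    -- (III): the sd × sd block matrix H with (j,k) block D_{jk}²² is invertible
    (H : Matrix (Fin d × Fin s) (Fin d × Fin s) ℝ)
    (hH : H = Matrix.of fun (x y : Fin d × Fin s) => D22 x.1 y.1 x.2 y.2)
    (hIII : IsUnit H.det)
    (B : Matrix (Fin d × Fin s) (Fin d × Fin s) ℝ)
    (hB : B = (kroneckerMap (· * ·) (1 : Matrix (Fin d) (Fin d) ℝ) a22) * H⁻¹) :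
    B.PosDef ∧ (fromBlocks a₀ 0 0 B).PosDef :=
  stmt_0_general p s d a11 a12 a21 a22 D21 D22 a₀ ha₀ D hD hpd hII H hH hIII B hB
end

section
/- Under assumptions (I)–(III), for every j = 1,…,d the matrices A₀·Ā_j and A₀·Â_j are symmetric, where A₀ := diag{a₀, (I_d ⊗ a₀²²)·H⁻¹}, Ā_j is the (m+sd)×(m+sd) matrix [[a_j, 0_{m×sd}], [0_{sd×m}, 0_{sd×sd}]], and Â_j is the (m+sd)×(m+sd) matrix, partitioned conformally with blocks indexed by (u₁ ∈ ℝ^{m−s}, u₂ ∈ ℝ^s, w₁,…,w_d ∈ ℝ^s), whose only nonzero blocks are the (u₂, w_k) block equal to δ_{jk}·I_s for k = 1,…,d, and the (w_i, u₁) block equal to D_{ij}²¹ and the (w_i, u₂) block equal to D_{ij}²² for i = 1,…,d. -/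
open Matrix

/-- Theorem 4.1(b): under assumptions (I)–(III), `A₀ ⬝ Ā_j` and `A₀ ⬝ Â_j` are symmetric
for every `j = 1,…,d`.  Here `m = p + s` with `p = m - s ≥ 1`, the `m`-dimensional index
is `Fin p ⊕ Fin s`, and the full state index is `(Fin p ⊕ Fin s) ⊕ (Fin d × Fin s)`. -/
theorem stmt_1 (p s d : ℕ) (hp : 1 ≤ p) (hs : 1 ≤ s) (hd : 1 ≤ d)
    (a : Fin d → Matrix (Fin p ⊕ Fin s) (Fin p ⊕ Fin s) ℝ)
    (a11 : Matrix (Fin p) (Fin p) ℝ) (a12 : Matrix (Fin p) (Fin s) ℝ)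
    (a21 : Matrix (Fin s) (Fin p) ℝ) (a22 : Matrix (Fin s) (Fin s) ℝ)
    (D21 : Fin d → Fin d → Matrix (Fin s) (Fin p) ℝ)
    (D22 : Fin d → Fin d → Matrix (Fin s) (Fin s) ℝ)
    (a₀ : Matrix (Fin p ⊕ Fin s) (Fin p ⊕ Fin s) ℝ)
    (ha₀ : a₀ = fromBlocks a11 a12 a21 a22)
    (D : Fin d → Fin d → Matrix (Fin p ⊕ Fin s) (Fin p ⊕ Fin s) ℝ)
    (hD : ∀ j k, D j k = fromBlocks 0 0 (D21 j k) (D22 j k))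
    (hpd : a₀.PosDef)
    -- (I): a₀ ⬝ a_j is symmetric
    (hI : ∀ j, (a₀ * a j).IsSymm)
    -- (II): the md × md block matrix with (j,k) block a₀ ⬝ D_{jk} is symmetric PSD
    (hII : (Matrix.of fun (x y : Fin d × (Fin p ⊕ Fin s)) =>
      (a₀ * D x.1 y.1) x.2 y.2).PosSemidef)
    -- (III): the sd × sd block matrix H with (j,k) block D_{jk}²² is invertible
    (H : Matrix (Fin d × Fin s) (Fin d × Fin s) ℝ)
    (hH : H = Matrix.of fun (x y : Fin d × Fin s) => D22 x.1 y.1 x.2 y.2)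
    (hIII : IsUnit H.det)
    (B : Matrix (Fin d × Fin s) (Fin d × Fin s) ℝ)
    (hB : B = (kroneckerMap (· * ·) (1 : Matrix (Fin d) (Fin d) ℝ) a22) * H⁻¹)
    (A₀ : Matrix ((Fin p ⊕ Fin s) ⊕ (Fin d × Fin s)) ((Fin p ⊕ Fin s) ⊕ (Fin d × Fin s)) ℝ)
    (hA₀ : A₀ = fromBlocks a₀ 0 0 B)
    -- Ā_j = [[a_j, 0], [0, 0]]
    (Abar : Fin d → Matrix ((Fin p ⊕ Fin s) ⊕ (Fin d × Fin s)) ((Fin p ⊕ Fin s) ⊕ (Fin d × Fin s)) ℝ)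
    (hAbar : ∀ j, Abar j = fromBlocks (a j) 0 0 0)
    -- Â_j: (u₂, w_k) block = δ_{jk} I_s, (w_i, u₁) block = D_{ij}²¹, (w_i, u₂) block = D_{ij}²²
    (Ahat : Fin d → Matrix ((Fin p ⊕ Fin s) ⊕ (Fin d × Fin s)) ((Fin p ⊕ Fin s) ⊕ (Fin d × Fin s)) ℝ)
    (hAhat : ∀ j, Ahat j = fromBlocks 0
      (Matrix.of fun (x : Fin p ⊕ Fin s) (q : Fin d × Fin s) =>
        Sum.elim (fun _ => (0 : ℝ))
          (fun x2 => if q.1 = j then (if x2 = q.2 then (1 : ℝ) else 0) else 0) x)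
      (Matrix.of fun (q : Fin d × Fin s) (y : Fin p ⊕ Fin s) =>
        Sum.elim (fun y1 => D21 q.1 j q.2 y1) (fun y2 => D22 q.1 j q.2 y2) y)
      0) :
    ∀ j, (A₀ * Abar j).IsSymm ∧ (A₀ * Ahat j).IsSymm := by
  -- symmetry of a₀ entrywise
  have ha₀s : ∀ z w, a₀ z w = a₀ w z := by
    intro z w
    have h2 := congrFun (congrFun hpd.isHermitian z) w
    simpa [Matrix.conjTranspose_apply] using h2.symm
  -- symmetry of the big matrix from (II)
  have hMsym : ∀ i k z y, (a₀ * D i k) z y = (a₀ * D k i) y z := by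
    intro i k z y
    have h2 := congrFun (congrFun hII.1 (i, z)) (k, y)
    simpa [Matrix.conjTranspose_apply] using h2.symm
  -- block form of a₀ * D i k
  have hblock : ∀ i k, a₀ * D i k =
      fromBlocks (a12 * D21 i k) (a12 * D22 i k) (a22 * D21 i k) (a22 * D22 i k) := by
    intro i k
    rw [ha₀, hD, fromBlocks_multiply]
    simp
  have h22 : ∀ i k x t, (a22 * D22 i k) x t = (a22 * D22 k i) t x := by
    intro i k x t
    have := hMsym i k (Sum.inr x) (Sum.inr t)
    simpa [hblock] using this
  have h21 : ∀ i k x y1, (a22 * D21 i k) x y1 = (a12 * D22 k i) y1 x := by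
    intro i k x y1
    have := hMsym i k (Sum.inr x) (Sum.inl y1)
    simpa [hblock] using this
  have ha22 : ∀ x t, a22 x t = a22 t x := by
    intro x t
    have := ha₀s (Sum.inr x) (Sum.inr t)
    simpa [ha₀] using this
  intro j
  constructor
  · -- the Ā_j part
    have h1 : A₀ * Abar j = fromBlocks (a₀ * a j) 0 0 0 := by
      rw [hA₀, hAbar, fromBlocks_multiply]
      simp
    have hIj : (a₀ * a j)ᵀ = a₀ * a j := hI j
    rw [Matrix.IsSymm, h1, fromBlocks_transpose]
    simp [hIj]
  · -- the Â_j part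
    set Ej : Matrix (Fin p ⊕ Fin s) (Fin d × Fin s) ℝ :=
      Matrix.of fun (x : Fin p ⊕ Fin s) (q : Fin d × Fin s) =>
        Sum.elim (fun _ => (0 : ℝ))
          (fun x2 => if q.1 = j then (if x2 = q.2 then (1 : ℝ) else 0) else 0) x with hEj
    set Fj : Matrix (Fin d × Fin s) (Fin p ⊕ Fin s) ℝ :=
      Matrix.of fun (q : Fin d × Fin s) (y : Fin p ⊕ Fin s) =>
        Sum.elim (fun y1 => D21 q.1 j q.2 y1) (fun y2 => D22 q.1 j q.2 y2) y with hFj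
    have hprod : A₀ * Ahat j = fromBlocks 0 (a₀ * Ej) (B * Fj) 0 := by
      rw [hA₀, hAhat, fromBlocks_multiply]
      simp [hEj, hFj]
    set K : Matrix (Fin d × Fin s) (Fin d × Fin s) ℝ :=
      kroneckerMap (· * ·) (1 : Matrix (Fin d) (Fin d) ℝ) a22 with hK
    -- commutation relation K * H = Hᵀ * K
    have lemA : K * H = Hᵀ * K := by
      ext ⟨i, x⟩ ⟨k, y⟩
      have hL : (K * H) (i, x) (k, y) = (a22 * D22 i k) x y := by
        simp only [Matrix.mul_apply, hK, hH, kroneckerMap_apply, Matrix.of_apply,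
          Matrix.one_apply, Fintype.sum_prod_type, ite_mul, one_mul, zero_mul]
        rw [Finset.sum_comm]
        simp [Finset.sum_ite_eq]
      have hR : (Hᵀ * K) (i, x) (k, y) = (a22 * D22 k i) y x := by
        simp only [Matrix.mul_apply, hK, hH, kroneckerMap_apply, Matrix.of_apply,
          Matrix.transpose_apply, Matrix.one_apply, Fintype.sum_prod_type, mul_ite,
          mul_one, mul_zero]
        rw [Finset.sum_comm]
        simp only [ite_mul, one_mul, zero_mul, mul_ite, mul_zero, mul_one,
          Finset.sum_ite_eq, Finset.sum_ite_eq', Finset.mem_univ, if_true]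
        refine Finset.sum_congr rfl fun t _ => ?_
        rw [ha22 t y, mul_comm]
      rw [hL, hR, h22]
    have lemB : K * Fj = Hᵀ * (a₀ * Ej)ᵀ := by
      ext ⟨i, x⟩ z
      have haE : ∀ z l t, (a₀ * Ej) z (l, t) = if l = j then a₀ z (Sum.inr t) else 0 := by
        intro z l t
        simp only [Matrix.mul_apply, hEj, Matrix.of_apply, Fintype.sum_sum_type,
          Sum.elim_inl, Sum.elim_inr, mul_zero, Finset.sum_const_zero, zero_add]
        by_cases hl : l = j
        · simp [hl, mul_ite, mul_one, mul_zero]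
        · simp [hl]
      have hR : (Hᵀ * (a₀ * Ej)ᵀ) (i, x) z = ∑ t, D22 j i t x * a₀ z (Sum.inr t) := by
        simp only [Matrix.mul_apply, Matrix.transpose_apply, hH, Matrix.of_apply,
          Fintype.sum_prod_type, haE, mul_ite, mul_zero]
        rw [Finset.sum_comm]
        simp only [ite_mul, one_mul, zero_mul, mul_ite, mul_zero, mul_one,
          Finset.sum_ite_eq, Finset.sum_ite_eq', Finset.mem_univ, if_true]
      have hL : (K * Fj) (i, x) z = ∑ t, a22 x t * Fj (i, t) z := by
        simp only [Matrix.mul_apply, hK, kroneckerMap_apply, Matrix.one_apply,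
          Fintype.sum_prod_type, ite_mul, one_mul, zero_mul]
        rw [Finset.sum_comm]
        simp only [ite_mul, one_mul, zero_mul, mul_ite, mul_zero, mul_one,
          Finset.sum_ite_eq, Finset.sum_ite_eq', Finset.mem_univ, if_true]
      rw [hL, hR]
      cases z with
      | inl y1 =>
        have : ∑ t, a22 x t * Fj (i, t) (Sum.inl y1) = (a22 * D21 i j) x y1 := by
          simp [hFj, Matrix.mul_apply]
        rw [this, h21]
        simp only [Matrix.mul_apply, ha₀]
        refine Finset.sum_congr rfl fun t _ => ?_
        simp [fromBlocks_apply₁₂, mul_comm]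
      | inr y2 =>
        have : ∑ t, a22 x t * Fj (i, t) (Sum.inr y2) = (a22 * D22 i j) x y2 := by
          simp [hFj, Matrix.mul_apply]
        rw [this, h22]
        simp only [Matrix.mul_apply, ha₀]
        refine Finset.sum_congr rfl fun t _ => ?_
        simp [fromBlocks_apply₂₂, mul_comm]
    -- use invertibility of H
    have hHT : IsUnit Hᵀ.det := by rwa [Matrix.det_transpose]
    have hKH : K * H⁻¹ = (Hᵀ)⁻¹ * K := by
      have h1 : Hᵀ * (K * H⁻¹) = K := by
        rw [← Matrix.mul_assoc, ← lemA, Matrix.mul_assoc,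
          Matrix.mul_nonsing_inv _ hIII, Matrix.mul_one]
      calc K * H⁻¹ = (Hᵀ)⁻¹ * (Hᵀ * (K * H⁻¹)) := by
            rw [← Matrix.mul_assoc, Matrix.nonsing_inv_mul _ hHT, Matrix.one_mul]
        _ = (Hᵀ)⁻¹ * K := by rw [h1]
    have key : B * Fj = (a₀ * Ej)ᵀ := by
      rw [hB, hKH, Matrix.mul_assoc, lemB, ← Matrix.mul_assoc,
        Matrix.nonsing_inv_mul _ hHT, Matrix.one_mul]
    rw [Matrix.IsSymm, hprod, fromBlocks_transpose, key]
    simp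
end

section
/- Under assumptions (II) and (III), the sd×sd matrix (I_d ⊗ a₀²²)·H, whose (j,k) block equals a₀²²·D_{jk}²², is symmetric positive definite. -/
/-!
Reading the block matrix of (II) only at the second-block coordinates of each factor gives a
principal submatrix, which is therefore positive semidefinite. Since the upper-right blocks of the
`D_{jk}` vanish, the lower-right block of `a₀ D_{jk}` is `a₀²² D_{jk}²²`, so this principal
submatrix is exactly `(I_d ⊗ a₀²²) H`. It is invertible because `a₀²²`, a principal submatrix of
the positive definite `a₀`, is invertible and `H` is invertible by (III); a positive semidefinite
invertible matrix is positive definite.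
-/

open Matrix
open scoped Kronecker

namespace Matrix

variable {ι m n o R : Type*}

theorem toBlocks₂₂_fromBlocks_mul_fromBlocks_zero [Fintype n] [Fintype o]
    [NonUnitalNonAssocSemiring R]
    (A : Matrix n n R) (B : Matrix n o R) (C : Matrix o n R) (D : Matrix o o R)
    (A' : Matrix n n R) (C' : Matrix o n R) (D' : Matrix o o R) :
    (fromBlocks A B C D * fromBlocks A' 0 C' D').toBlocks₂₂ = D * D' := by
  simp [fromBlocks_multiply]

theorem one_kronecker_mul_comp [Fintype ι] [DecidableEq ι] [Fintype n] [NonAssocSemiring R]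
    (A : Matrix n n R) (B : Matrix ι ι (Matrix n n R)) :
    (1 : Matrix ι ι R) ⊗ₖ A * comp ι ι n n R B = comp ι ι n n R (of fun j k => A * B j k) := by
  ext ⟨j, a⟩ ⟨k, b⟩
  simp [mul_apply, Fintype.sum_prod_type, one_apply, ite_mul, Finset.sum_ite_eq]

theorem comp_submatrix_prodMap (M : Matrix ι ι (Matrix n n R)) (f : m → n) :
    (comp ι ι n n R M).submatrix (Prod.map id f) (Prod.map id f) =
      comp ι ι m m R (M.map (·.submatrix f f)) :=
  rfl

end Matrix

theorem stmt_3_general (p s d : ℕ)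
    (a11 : Matrix (Fin p) (Fin p) ℝ) (a12 : Matrix (Fin p) (Fin s) ℝ)
    (a21 : Matrix (Fin s) (Fin p) ℝ) (a22 : Matrix (Fin s) (Fin s) ℝ)
    (D21 : Fin d → Fin d → Matrix (Fin s) (Fin p) ℝ)
    (D22 : Fin d → Fin d → Matrix (Fin s) (Fin s) ℝ)
    (a₀ : Matrix (Fin p ⊕ Fin s) (Fin p ⊕ Fin s) ℝ)
    (ha₀ : a₀ = fromBlocks a11 a12 a21 a22)
    (D : Fin d → Fin d → Matrix (Fin p ⊕ Fin s) (Fin p ⊕ Fin s) ℝ)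
    (hD : ∀ j k, D j k = fromBlocks 0 0 (D21 j k) (D22 j k))
    (hpd : a₀.PosDef)
    -- (II): the md × md block matrix with (j,k) block a₀ ⬝ D_{jk} is symmetric PSD
    (hII : (Matrix.of fun (x y : Fin d × (Fin p ⊕ Fin s)) =>
      (a₀ * D x.1 y.1) x.2 y.2).PosSemidef)
    -- (III): the sd × sd block matrix H with (j,k) block D_{jk}²² is invertible
    (H : Matrix (Fin d × Fin s) (Fin d × Fin s) ℝ)
    (hH : H = Matrix.of fun (x y : Fin d × Fin s) => D22 x.1 y.1 x.2 y.2)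
    (hIII : IsUnit H.det) :
    ((kroneckerMap (· * ·) (1 : Matrix (Fin d) (Fin d) ℝ) a22) * H).PosDef := by
  have hprincipal : (1 : Matrix (Fin d) (Fin d) ℝ) ⊗ₖ a22 * H =
      (comp _ _ _ _ ℝ (of fun j k => a₀ * D j k)).submatrix
        (Prod.map id Sum.inr) (Prod.map id Sum.inr) := by
    rw [hH, comp_submatrix_prodMap]
    refine (one_kronecker_mul_comp a22 (of D22)).trans (congrArg _ ?_)
    ext1 j k
    simp only [of_apply, map_apply, ha₀, hD]
    exact (toBlocks₂₂_fromBlocks_mul_fromBlocks_zero ..).symm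
  have hpsd : ((1 : Matrix (Fin d) (Fin d) ℝ) ⊗ₖ a22 * H).PosSemidef :=
    hprincipal ▸ hII.submatrix _
  have ha22 : a22.PosDef := (ha₀ ▸ hpd).submatrix Sum.inr_injective
  exact hpsd.posDef_iff_isUnit.mpr <|
    (isUnit_one.kronecker ha22.isUnit).mul ((isUnit_iff_isUnit_det H).mpr hIII)

/-- Key step in Theorem 4.1(a): under assumptions (II) and (III), the sd × sd matrix
`(I_d ⊗ a₀²²) * H`, whose (j,k) block is `a₀²² * D_{jk}²²`, is symmetric positive definite. -/
theorem stmt_3 (p s d : ℕ) (hp : 1 ≤ p) (hs : 1 ≤ s) (hd : 1 ≤ d)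
    (a11 : Matrix (Fin p) (Fin p) ℝ) (a12 : Matrix (Fin p) (Fin s) ℝ)
    (a21 : Matrix (Fin s) (Fin p) ℝ) (a22 : Matrix (Fin s) (Fin s) ℝ)
    (D21 : Fin d → Fin d → Matrix (Fin s) (Fin p) ℝ)
    (D22 : Fin d → Fin d → Matrix (Fin s) (Fin s) ℝ)
    (a₀ : Matrix (Fin p ⊕ Fin s) (Fin p ⊕ Fin s) ℝ)
    (ha₀ : a₀ = fromBlocks a11 a12 a21 a22)
    (D : Fin d → Fin d → Matrix (Fin p ⊕ Fin s) (Fin p ⊕ Fin s) ℝ)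
    (hD : ∀ j k, D j k = fromBlocks 0 0 (D21 j k) (D22 j k))
    (hpd : a₀.PosDef)
    -- (II): the md × md block matrix with (j,k) block a₀ ⬝ D_{jk} is symmetric PSD
    (hII : (Matrix.of fun (x y : Fin d × (Fin p ⊕ Fin s)) =>
      (a₀ * D x.1 y.1) x.2 y.2).PosSemidef)
    -- (III): the sd × sd block matrix H with (j,k) block D_{jk}²² is invertible
    (H : Matrix (Fin d × Fin s) (Fin d × Fin s) ℝ)
    (hH : H = Matrix.of fun (x y : Fin d × Fin s) => D22 x.1 y.1 x.2 y.2)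
    (hIII : IsUnit H.det) :
    ((kroneckerMap (· * ·) (1 : Matrix (Fin d) (Fin d) ℝ) a22) * H).PosDef :=
  stmt_3_general p s d a11 a12 a21 a22 D21 D22 a₀ ha₀ D hD hpd hII H hH hIII
end

section
/- Under assumptions (II) and (III), B·G²¹ = I_d ⊗ (a₀¹²)ᵀ, where B := (I_d ⊗ a₀²²)·H⁻¹, G²¹ is the sd×(m−s)d block matrix whose (j,k) block is D_{jk}²¹, and I_d ⊗ (a₀¹²)ᵀ is the sd×(m−s)d block-diagonal matrix with d copies of (a₀¹²)ᵀ on the diagonal. -/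
open Matrix

/-- Identity (4.10a) in the proof of Theorem 4.1(b): under assumptions (II) and (III),
`B * G²¹ = I_d ⊗ (a₀¹²)ᵀ`, where `B = (I_d ⊗ a₀²²) * H⁻¹` and `G²¹` is the
sd × (m−s)d block matrix with (j,k) block `D_{jk}²¹`. -/
theorem stmt_4 (p s d : ℕ) (hp : 1 ≤ p) (hs : 1 ≤ s) (hd : 1 ≤ d)
    (a11 : Matrix (Fin p) (Fin p) ℝ) (a12 : Matrix (Fin p) (Fin s) ℝ)
    (a21 : Matrix (Fin s) (Fin p) ℝ) (a22 : Matrix (Fin s) (Fin s) ℝ)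
    (D21 : Fin d → Fin d → Matrix (Fin s) (Fin p) ℝ)
    (D22 : Fin d → Fin d → Matrix (Fin s) (Fin s) ℝ)
    (a₀ : Matrix (Fin p ⊕ Fin s) (Fin p ⊕ Fin s) ℝ)
    (ha₀ : a₀ = fromBlocks a11 a12 a21 a22)
    (D : Fin d → Fin d → Matrix (Fin p ⊕ Fin s) (Fin p ⊕ Fin s) ℝ)
    (hD : ∀ j k, D j k = fromBlocks 0 0 (D21 j k) (D22 j k))
    (hpd : a₀.PosDef)
    -- (II): the md × md block matrix with (j,k) block a₀ ⬝ D_{jk} is symmetric PSD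
    (hII : (Matrix.of fun (x y : Fin d × (Fin p ⊕ Fin s)) =>
      (a₀ * D x.1 y.1) x.2 y.2).PosSemidef)
    -- (III): the sd × sd block matrix H with (j,k) block D_{jk}²² is invertible
    (H : Matrix (Fin d × Fin s) (Fin d × Fin s) ℝ)
    (hH : H = Matrix.of fun (x y : Fin d × Fin s) => D22 x.1 y.1 x.2 y.2)
    (hIII : IsUnit H.det)
    (B : Matrix (Fin d × Fin s) (Fin d × Fin s) ℝ)
    (hB : B = (kroneckerMap (· * ·) (1 : Matrix (Fin d) (Fin d) ℝ) a22) * H⁻¹)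
    (G21 : Matrix (Fin d × Fin s) (Fin d × Fin p) ℝ)
    (hG21 : G21 = Matrix.of fun (x : Fin d × Fin s) (y : Fin d × Fin p) => D21 x.1 y.1 x.2 y.2) :
    B * G21 = kroneckerMap (· * ·) (1 : Matrix (Fin d) (Fin d) ℝ) a12ᵀ := by
  classical
  set K : Matrix (Fin d × Fin s) (Fin d × Fin s) ℝ :=
    kroneckerMap (· * ·) (1 : Matrix (Fin d) (Fin d) ℝ) a22 with hK
  -- a22 is symmetric
  have ha22 : ∀ u v, a22 u v = a22 v u := by
    intro u v
    have h := congrFun (congrFun hpd.isHermitian (Sum.inr u)) (Sum.inr v)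
    simpa [ha₀, conjTranspose_apply] using h.symm
  -- block decomposition of a₀ * D j k
  have hprod : ∀ j k, a₀ * D j k =
      fromBlocks (a12 * D21 j k) (a12 * D22 j k) (a22 * D21 j k) (a22 * D22 j k) := by
    intro j k
    rw [ha₀, hD, fromBlocks_multiply]
    simp
  -- symmetry of the big matrix, entrywise
  have key : ∀ (j k : Fin d) x y, (a₀ * D k j) y x = (a₀ * D j k) x y := by
    intro j k x y
    have h := congrFun (congrFun hII.isHermitian (j, x)) (k, y)
    simpa [conjTranspose_apply] using h
  have hsym12 : ∀ j k u v, (a12 * D22 j k) u v = (a22 * D21 k j) v u := by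
    intro j k u v
    have h := key j k (Sum.inl u) (Sum.inr v)
    simpa [hprod] using h.symm
  have hsym22 : ∀ j k u v, (a22 * D22 j k) u v = (a22 * D22 k j) v u := by
    intro j k u v
    have h := key j k (Sum.inr u) (Sum.inr v)
    simpa [hprod] using h.symm
  -- matrix identity e1 : K * H = Hᵀ * K
  have e1 : K * H = Hᵀ * K := by
    ext ⟨j, u⟩ ⟨k, v⟩
    have h1 : (K * H) (j, u) (k, v) = (a22 * D22 j k) u v := by
      simp [hK, mul_apply, hH, kroneckerMap_apply, one_apply,
        Fintype.sum_prod_type, ite_mul, mul_comm]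
    have h2 : (Hᵀ * K) (j, u) (k, v) = (a22 * D22 k j) v u := by
      simp only [mul_apply, transpose_apply, hK, hH, kroneckerMap_apply, one_apply,
        Fintype.sum_prod_type, Matrix.of_apply]
      rw [Finset.sum_comm]
      simp only [mul_ite, mul_one, mul_zero, ite_mul, one_mul, zero_mul,
        Finset.sum_ite_eq, Finset.sum_ite_eq', Finset.mem_univ, if_true]
      exact Finset.sum_congr rfl fun w _ => by rw [ha22 v w]; ring
    rw [h1, h2, hsym22]
  -- matrix identity e2 : K * G21 = Hᵀ * (1 ⊗ a12ᵀ)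
  have e2 : K * G21 = Hᵀ * kroneckerMap (· * ·) (1 : Matrix (Fin d) (Fin d) ℝ) a12ᵀ := by
    ext ⟨j, u⟩ ⟨k, v⟩
    have h1 : (K * G21) (j, u) (k, v) = (a22 * D21 j k) u v := by
      simp [hK, mul_apply, hG21, kroneckerMap_apply, one_apply,
        Fintype.sum_prod_type, ite_mul, mul_comm]
    have h2 : (Hᵀ * kroneckerMap (· * ·) (1 : Matrix (Fin d) (Fin d) ℝ) a12ᵀ)
        (j, u) (k, v) = (a12 * D22 k j) v u := by
      simp only [mul_apply, transpose_apply, hH, kroneckerMap_apply, one_apply,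
        Fintype.sum_prod_type, Matrix.of_apply]
      rw [Finset.sum_comm]
      simp only [mul_ite, mul_one, mul_zero, ite_mul, one_mul, zero_mul,
        Finset.sum_ite_eq, Finset.sum_ite_eq', Finset.mem_univ, if_true]
      exact Finset.sum_congr rfl fun w _ => by ring
    rw [h1, h2, hsym12]
  -- invertibility facts
  have hHinv : H * H⁻¹ = 1 := mul_nonsing_inv H hIII
  have hIIIT : IsUnit Hᵀ.det := by simpa [det_transpose] using hIII
  have hHTinv : Hᵀ⁻¹ * Hᵀ = 1 := nonsing_inv_mul Hᵀ hIIIT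
  -- K * H⁻¹ = Hᵀ⁻¹ * K
  have key2 : K * H⁻¹ = Hᵀ⁻¹ * K := by
    calc K * H⁻¹ = Hᵀ⁻¹ * Hᵀ * K * H⁻¹ := by rw [hHTinv, one_mul]
      _ = Hᵀ⁻¹ * (Hᵀ * K) * H⁻¹ := by rw [mul_assoc Hᵀ⁻¹ Hᵀ K]
      _ = Hᵀ⁻¹ * (K * H) * H⁻¹ := by rw [e1]
      _ = Hᵀ⁻¹ * K * (H * H⁻¹) := by rw [mul_assoc, mul_assoc, mul_assoc]
      _ = Hᵀ⁻¹ * K := by rw [hHinv, mul_one]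
  calc B * G21 = K * H⁻¹ * G21 := by rw [hB, hK]
    _ = Hᵀ⁻¹ * K * G21 := by rw [key2]
    _ = Hᵀ⁻¹ * (K * G21) := by rw [Matrix.mul_assoc]
    _ = Hᵀ⁻¹ * (Hᵀ * kroneckerMap (· * ·) (1 : Matrix (Fin d) (Fin d) ℝ) a12ᵀ) := by rw [e2]
    _ = kroneckerMap (· * ·) (1 : Matrix (Fin d) (Fin d) ℝ) a12ᵀ := by
        rw [← Matrix.mul_assoc, hHTinv, Matrix.one_mul]
end

section
/- Let E be a symmetric n×n real matrix and H an invertible nd×nd real matrix, and set Ĝ := (I_d ⊗ E)·H⁻¹, where I_d ⊗ E is the nd×nd block-diagonal matrix with d copies of E. For j = 1,…,d define the n(1+d)×n(1+d) block matrix A_j := [[0_{n×n}, e_jᵀ ⊗ I_n], [H·(e_j ⊗ I_n), 0_{nd×nd}]], where e_j is the j-th standard basis vector of ℝ^d (so the top-right block row is (δ_{j1}I_n, …, δ_{jd}I_n) and the bottom-left block column is H applied to the block column with I_n in position j). Then diag{E, Ĝ}·A_j is symmetric for every j. -/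
open Matrix

/-- Section 3.2, condition (iii): with `E` symmetric, `H` invertible and
`Ĝ = (I_d ⊗ E) * H⁻¹`, the matrices `diag{E, Ĝ} * A_j` are symmetric, where
`A_j = [[0, e_jᵀ ⊗ I_n], [H (e_j ⊗ I_n), 0]]`. -/
theorem stmt_10 (n d : ℕ) (hn : 1 ≤ n) (hd : 1 ≤ d)
    (E : Matrix (Fin n) (Fin n) ℝ) (hE : E.IsSymm)
    (H : Matrix (Fin d × Fin n) (Fin d × Fin n) ℝ) (hH : IsUnit H.det)
    (Ghat : Matrix (Fin d × Fin n) (Fin d × Fin n) ℝ)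
    (hGhat : Ghat = (kroneckerMap (· * ·) (1 : Matrix (Fin d) (Fin d) ℝ) E) * H⁻¹)
    (A : Fin d → Matrix (Fin n ⊕ (Fin d × Fin n)) (Fin n ⊕ (Fin d × Fin n)) ℝ)
    (hA : ∀ j, A j = fromBlocks 0
      -- top-right block row: (δ_{j1} I_n, …, δ_{jd} I_n)
      (Matrix.of fun (x : Fin n) (q : Fin d × Fin n) =>
        if q.1 = j then (if x = q.2 then (1 : ℝ) else 0) else 0)
      -- bottom-left block column: H applied to the block column with I_n in position j
      (H * Matrix.of fun (q : Fin d × Fin n) (y : Fin n) =>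
        if q.1 = j then (if q.2 = y then (1 : ℝ) else 0) else 0)
      0) :
    ∀ j, (fromBlocks E 0 0 Ghat * A j).IsSymm := by
  intro j
  have hEsymm : ∀ a b, E a b = E b a := fun a b => by
    conv_lhs => rw [← hE]
    rfl
  rw [hA j, hGhat, Matrix.IsSymm]
  have hcancel :
      (kroneckerMap (· * ·) (1 : Matrix (Fin d) (Fin d) ℝ) E) * H⁻¹ *
        (H * Matrix.of fun (q : Fin d × Fin n) (y : Fin n) =>
          if q.1 = j then (if q.2 = y then (1 : ℝ) else 0) else 0) =
      (kroneckerMap (· * ·) (1 : Matrix (Fin d) (Fin d) ℝ) E) *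
        Matrix.of fun (q : Fin d × Fin n) (y : Fin n) =>
          if q.1 = j then (if q.2 = y then (1 : ℝ) else 0) else 0 := by
    rw [Matrix.mul_assoc, ← Matrix.mul_assoc H⁻¹, Matrix.nonsing_inv_mul H hH,
      Matrix.one_mul]
  rw [Matrix.fromBlocks_multiply]
  simp only [Matrix.mul_zero, Matrix.zero_mul, add_zero, zero_add,
    ← Matrix.mul_assoc, hcancel, Matrix.fromBlocks_transpose, Matrix.transpose_zero]
  ext i k
  rcases i with b | ⟨k1, a⟩ <;> rcases k with c | ⟨k2, e⟩ <;>
    simp only [Matrix.transpose_apply, Matrix.fromBlocks_apply₁₁,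
      Matrix.fromBlocks_apply₁₂, Matrix.fromBlocks_apply₂₁, Matrix.fromBlocks_apply₂₂,
      Matrix.zero_apply, Matrix.mul_apply, Matrix.of_apply,
      Matrix.kroneckerMap_apply, Matrix.one_apply]
  · rw [Fintype.sum_prod_type]
    simp only [mul_ite, mul_one, mul_zero, ite_mul, zero_mul, one_mul]
    by_cases hk : k2 = j
    · subst hk
      simp [Finset.sum_ite_eq, hEsymm b e]
    · simp [hk]
  · rw [Fintype.sum_prod_type]
    simp only [mul_ite, mul_one, mul_zero, ite_mul, zero_mul, one_mul]
    by_cases hk : k1 = j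
    · subst hk
      simp [Finset.sum_ite_eq, hEsymm a c]
    · simp [hk]
end

section
/- Let d ≥ 1, let p′, a ∈ ℝ satisfy 0 < p′ < a², and let j ∈ {1,…,d} with e_j the j-th standard basis vector of ℝ^d. Define the (d+2)×(d+2) real matrices A₀ := diag{p′, I_d, (a² − p′)⁻¹} and A_j := [[0, e_jᵀ, 0], [p′·e_j, 0_{d×d}, e_j], [0, (a² − p′)·e_jᵀ, 0]]. Then A₀ is symmetric positive definite, A₀·A_j is symmetric, and A₀·diag{0, −I_d, −1} = diag{0, −I_d, −(a² − p′)⁻¹} is symmetric negative semidefinite. -/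
open Matrix

/-- Section 3.3: for `0 < p′ < a²`, the symmetrizer `A₀ = diag{p′, I_d, (a² − p′)⁻¹}` is
symmetric positive definite, `A₀ A_j` is symmetric, and
`A₀ diag{0, −I_d, −1} = diag{0, −I_d, −(a² − p′)⁻¹}` is symmetric negative semidefinite.
The index set `(d+2)` is realized as `Fin 1 ⊕ (Fin d ⊕ Fin 1)` (u, v₁…v_d, w). -/
theorem stmt_12 (d : ℕ) (hd : 1 ≤ d) (p' a : ℝ) (hp : 0 < p') (ha : p' < a ^ 2)
    (j : Fin d)
    (A₀ : Matrix (Fin 1 ⊕ (Fin d ⊕ Fin 1)) (Fin 1 ⊕ (Fin d ⊕ Fin 1)) ℝ)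
    (hA₀ : A₀ = fromBlocks (p' • 1) 0 0
      (fromBlocks 1 0 0 ((a ^ 2 - p')⁻¹ • 1)))
    (Aj : Matrix (Fin 1 ⊕ (Fin d ⊕ Fin 1)) (Fin 1 ⊕ (Fin d ⊕ Fin 1)) ℝ)
    (hAj : Aj = fromBlocks 0
      -- first block row: (0, e_jᵀ, 0)
      (Matrix.of fun (_ : Fin 1) (q : Fin d ⊕ Fin 1) =>
        Sum.elim (fun k => if k = j then (1 : ℝ) else 0) (fun _ => 0) q)
      -- first block column: (0, p′ e_j, 0)ᵀ
      (Matrix.of fun (r : Fin d ⊕ Fin 1) (_ : Fin 1) =>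
        Sum.elim (fun k => if k = j then p' else 0) (fun _ => (0 : ℝ)) r)
      -- remaining blocks: [[0_{d×d}, e_j], [(a² − p′) e_jᵀ, 0]]
      (Matrix.of fun (r q : Fin d ⊕ Fin 1) =>
        Sum.elim
          (fun k => Sum.elim (fun _ => (0 : ℝ)) (fun _ => if k = j then 1 else 0) q)
          (fun _ => Sum.elim (fun k' => if k' = j then a ^ 2 - p' else 0) (fun _ => 0) q)
          r)) :
    A₀.PosDef ∧ (A₀ * Aj).IsSymm ∧
      A₀ * fromBlocks 0 0 0 (fromBlocks (-1) 0 0 (-1)) =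
        fromBlocks 0 0 0 (fromBlocks (-1) 0 0 (-((a ^ 2 - p')⁻¹ • 1))) ∧
      (-(fromBlocks (0 : Matrix (Fin 1) (Fin 1) ℝ) 0 0
        (fromBlocks (-1 : Matrix (Fin d) (Fin d) ℝ) 0 0
          (-((a ^ 2 - p')⁻¹ • (1 : Matrix (Fin 1) (Fin 1) ℝ)))))).PosSemidef := by
  have hc : (0:ℝ) < a ^ 2 - p' := by linarith
  have hcne : a ^ 2 - p' ≠ 0 := ne_of_gt hc
  have hA₀d : A₀ = Matrix.diagonal (Sum.elim (fun _ => p')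
      (Sum.elim (fun _ => 1) (fun _ => (a ^ 2 - p')⁻¹))) := by
    rw [hA₀, smul_one_eq_diagonal, smul_one_eq_diagonal,
      show (1 : Matrix (Fin d) (Fin d) ℝ) = diagonal (fun _ => 1) from diagonal_one.symm,
      fromBlocks_diagonal, fromBlocks_diagonal]
  refine ⟨?_, ?_, ?_, ?_⟩
  · rw [hA₀d]
    refine (Matrix.posDef_diagonal_iff).mpr fun i => ?_
    rcases i with _ | (_ | _) <;> simp [hp, hc, inv_pos.mpr hc]
  · rw [Matrix.IsSymm.ext_iff]
    intro i k
    rw [hA₀d, hAj]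
    rcases i with i | (i | i) <;> rcases k with k | (k | k) <;>
      simp [Matrix.diagonal_mul, Matrix.fromBlocks] <;>
      split_ifs <;> field_simp
  · rw [hA₀, fromBlocks_multiply, fromBlocks_multiply]
    simp
  · have : (-(fromBlocks (0 : Matrix (Fin 1) (Fin 1) ℝ) 0 0
        (fromBlocks (-1 : Matrix (Fin d) (Fin d) ℝ) 0 0
          (-((a ^ 2 - p')⁻¹ • (1 : Matrix (Fin 1) (Fin 1) ℝ)))))) =
        Matrix.diagonal (Sum.elim (fun _ => (0:ℝ))
          (Sum.elim (fun _ => 1) (fun _ => (a ^ 2 - p')⁻¹))) := by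
      ext i k
      rcases i with i | (i | i) <;> rcases k with k | (k | k) <;>
        simp [Matrix.fromBlocks, Matrix.diagonal, Matrix.one_apply]
    rw [this]
    refine (Matrix.posSemidef_diagonal_iff).mpr fun i => ?_
    rcases i with _ | (_ | _) <;> simp [le_of_lt (inv_pos.mpr hc)]
end

section
/- Let K ≥ 1 and M ≥ 2 be integers, H an invertible K×K real matrix, and Λ₁,…,Λ_M diagonal K×K real matrices with strictly positive diagonal entries satisfying Λ₁ + ⋯ + Λ_M = I_K. Set C_l := H⁻¹·Λ_l·H for l = 2,…,M, and let P be the KM×KM block matrix whose first block row consists of M copies of I_K and whose block (l,k), for l ≥ 2, equals δ_{lk}·I_K − C_l (P is invertible). Let Ã₀ := diag{Hᵀ·Λ₁⁻¹·H, Hᵀ·Λ₂⁻¹·H, …, Hᵀ·Λ_M⁻¹·H} and A₀ := P^{−T}·Ã₀·P⁻¹. Then A₀·diag{0_{K×K}, I_{K(M−1)}} = [[0_{K×K}, 0], [0, S]], where S := 𝟙·(Hᵀ·Λ₁⁻¹·H)·𝟙ᵀ + diag{Hᵀ·Λ₂⁻¹·H, …, Hᵀ·Λ_M⁻¹·H}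 with 𝟙 the K(M−1)×K block column of M−1 copies of I_K; moreover S is symmetric positive definite. -/
/-!
In block form (`Matrix.comp`, blocks indexed by `Fin M`), `P⁻¹` is explicit: its first block
column is `(C_l)_l` and its block column `k ≥ 2` is `e_k - e_1`, which only uses
`∑ C_l = H⁻¹ (∑ Λ_l) H = I`. Each block of `A₀ Dg = (P⁻¹)ᵀ Ã₀ P⁻¹ Dg` is then a difference of two
terms, and the first block row vanishes because `C_lᵀ (Hᵀ Λ_l⁻¹ H) = HᵀH` does not depend on `l`.
The matrix `S` is `G₀ = Hᵀ Λ₁⁻¹ H` repeated in every block (positive semidefinite) plus the block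
diagonal matrix of the positive definite `Hᵀ Λ_l⁻¹ H`.
-/

open Matrix

namespace Matrix

variable {ι n R : Type*} [Fintype ι] [DecidableEq ι] [Fintype n]

theorem transpose_similar_mul_congr_inv [DecidableEq n] [CommRing R] {H D : Matrix n n R}
    (hH : IsUnit H.det) (hD : IsUnit D.det) (hDt : Dᵀ = D) :
    (H⁻¹ * D * H)ᵀ * (Hᵀ * D⁻¹ * H) = Hᵀ * H := by
  have hHt : IsUnit Hᵀ.det := by rwa [det_transpose]
  simp only [transpose_mul, hDt, transpose_nonsing_inv, Matrix.mul_assoc,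
    nonsing_inv_mul_cancel_left Hᵀ _ hHt, mul_nonsing_inv_cancel_left D _ hD]

theorem PosDef.transpose_mul_mul_of_isUnit [DecidableEq n] {A H : Matrix n n ℝ} (hA : A.PosDef)
    (hH : IsUnit H.det) : (Hᵀ * A * H).PosDef := by
  simpa [conjTranspose_eq_transpose_of_trivial] using hA.conjTranspose_mul_mul_same
    (mulVec_injective_iff_isUnit.mpr ((isUnit_iff_isUnit_det H).mpr hH))

open scoped ComplexOrder in
theorem posDef_comp_diagonal {𝕜 : Type*} [RCLike 𝕜] {G : ι → Matrix n n 𝕜}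
    (hG : ∀ l, (G l).PosDef) : (comp ι ι n n 𝕜 (diagonal G)).PosDef := by
  refine PosDef.of_dotProduct_mulVec_pos ?_ fun v hv => ?_
  · ext x y
    rcases eq_or_ne x.1 y.1 with h | h
    · simp [h, (hG y.1).isHermitian.apply]
    · simp [h, h.symm]
  have hsplit : star v ⬝ᵥ (comp ι ι n n 𝕜 (diagonal G) *ᵥ v) =
      ∑ l, star (fun i => v (l, i)) ⬝ᵥ (G l *ᵥ fun i => v (l, i)) := by
    simp [dotProduct, mulVec, Fintype.sum_prod_type, diagonal_apply, Matrix.ite_apply]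
  obtain ⟨x, hx⟩ := Function.ne_iff.mp hv
  rw [hsplit]
  exact Finset.sum_pos' (fun l _ => (hG l).posSemidef.dotProduct_mulVec_nonneg _)
    ⟨x.1, Finset.mem_univ _, (hG x.1).dotProduct_mulVec_pos fun h => hx (congrFun h x.2)⟩

end Matrix

namespace KineticRelaxation

variable {ι n R : Type*} [Fintype ι] [DecidableEq ι] [DecidableEq n] [CommRing R]
  (i₀ : ι) (C : ι → Matrix n n R)

def blocksP : Matrix ι ι (Matrix n n R) :=
  of fun l k => if l = i₀ then 1 else (if l = k then 1 else 0) - C l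

def blocksPInv : Matrix ι ι (Matrix n n R) :=
  of fun l k => if k = i₀ then C l else (if l = k then 1 else 0) - if l = i₀ then 1 else 0

variable {C}

theorem sum_blocksPInv (hC : ∑ l, C l = 1) (k : ι) :
    ∑ l, blocksPInv i₀ C l k = if k = i₀ then 1 else 0 := by
  by_cases hk : k = i₀
  · simp [blocksPInv, hk, hC]
  · simp [blocksPInv, hk, Finset.sum_sub_distrib]

variable [Fintype n]

theorem blocksP_mul_blocksPInv (hC : ∑ l, C l = 1) : blocksP i₀ C * blocksPInv i₀ C = 1 := by
  ext1 l k
  rw [mul_apply, one_apply]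
  by_cases hl : l = i₀
  · simp [blocksP, hl, sum_blocksPInv i₀ hC, eq_comm]
  · simp only [blocksP, of_apply, hl, if_false, sub_mul, ite_mul, one_mul, zero_mul,
      Finset.sum_sub_distrib, Finset.sum_ite_eq, Finset.mem_univ, if_true, ← Finset.mul_sum,
      sum_blocksPInv i₀ hC]
    by_cases hk : k = i₀ <;> simp [blocksPInv, hk, hl]

theorem inv_comp_blocksP (hC : ∑ l, C l = 1) :
    (comp ι ι n n R (blocksP i₀ C))⁻¹ = comp ι ι n n R (blocksPInv i₀ C) := by
  refine inv_eq_right_inv ?_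
  rw [← compRingEquiv_apply, ← compRingEquiv_apply, ← map_mul, blocksP_mul_blocksPInv i₀ hC,
    map_one]

theorem symmetrizer_mul_projection_blocks {G : ι → Matrix n n R} {T : Matrix n n R}
    (hCG : ∀ l, (C l)ᵀ * G l = T) :
    (blocksPInv i₀ C)ᵀ.map transpose * diagonal G * blocksPInv i₀ C *
        diagonal (fun l => if l = i₀ then 0 else 1) =
      of fun l m => if l = i₀ ∨ m = i₀ then 0 else G i₀ + if l = m then G l else 0 := by
  ext1 l m
  rw [mul_diagonal, mul_apply]
  simp only [mul_diagonal, transpose_apply, map_apply]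
  by_cases hm : m = i₀
  · simp [hm]
  simp only [blocksPInv, of_apply, hm, if_false, mul_one, mul_sub, mul_ite, mul_zero,
    Finset.sum_sub_distrib, Finset.sum_ite_eq', Finset.mem_univ, if_true]
  by_cases hl : l = i₀
  · simp [hl, hCG]
  · rcases eq_or_ne m l with rfl | hml
    · simp [hl, Ne.symm hl, add_comm]
    · simp [hl, hml, hml.symm, Ne.symm hl]

theorem symmetrizer_mul_projection {G : ι → Matrix n n R} {T : Matrix n n R}
    (hC : ∑ l, C l = 1) (hCG : ∀ l, (C l)ᵀ * G l = T) :
    ((comp ι ι n n R (blocksP i₀ C))⁻¹)ᵀ * comp ι ι n n R (diagonal G) *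
        (comp ι ι n n R (blocksP i₀ C))⁻¹ *
        comp ι ι n n R (diagonal fun l => if l = i₀ then 0 else 1) =
      comp ι ι n n R
        (of fun l m => if l = i₀ ∨ m = i₀ then 0 else G i₀ + if l = m then G l else 0) := by
  rw [inv_comp_blocksP i₀ hC, transpose_comp, ← symmetrizer_mul_projection_blocks i₀ hCG]
  simp only [← compRingEquiv_apply, map_mul]

end KineticRelaxation

open KineticRelaxation

/-- Section 3.5, dissipation condition (iv): with `Λ_l = diagonal (lam l)` positive diagonal
matrices summing to `I_K`, `C_l = H⁻¹ Λ_l H`, `P` the block change-of-basis matrix,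
`Ã₀ = diag{Hᵀ Λ_l⁻¹ H}` and `A₀ = P⁻ᵀ Ã₀ P⁻¹`, one has
`A₀ · diag{0_K, I_{K(M−1)}} = [[0, 0], [0, S]]` with
`S = 𝟙 (Hᵀ Λ₁⁻¹ H) 𝟙ᵀ + diag{Hᵀ Λ₂⁻¹ H, …, Hᵀ Λ_M⁻¹ H}` symmetric positive definite. -/
theorem stmt_18 (K M : ℕ) (hM : 2 ≤ M)
    (H : Matrix (Fin K) (Fin K) ℝ) (hH : IsUnit H.det)
    (lam : Fin M → Fin K → ℝ)
    (hpos : ∀ l i, 0 < lam l i)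
    (hsum : (∑ l, Matrix.diagonal (lam l)) = (1 : Matrix (Fin K) (Fin K) ℝ))
    (C : Fin M → Matrix (Fin K) (Fin K) ℝ)
    (hC : ∀ l, C l = H⁻¹ * Matrix.diagonal (lam l) * H)
    (P : Matrix (Fin M × Fin K) (Fin M × Fin K) ℝ)
    (hP : P = Matrix.of fun (x y : Fin M × Fin K) =>
      if x.1.val = 0 then (if x.2 = y.2 then (1 : ℝ) else 0)
      else (if x.1 = y.1 ∧ x.2 = y.2 then (1 : ℝ) else 0) - C x.1 x.2 y.2)
    (Atil : Matrix (Fin M × Fin K) (Fin M × Fin K) ℝ)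
    (hAtil : Atil = Matrix.of fun (x y : Fin M × Fin K) =>
      if x.1 = y.1 then (Hᵀ * (Matrix.diagonal (lam x.1))⁻¹ * H) x.2 y.2 else 0)
    (A₀ : Matrix (Fin M × Fin K) (Fin M × Fin K) ℝ)
    (hA₀ : A₀ = (P⁻¹)ᵀ * Atil * P⁻¹)
    -- diag{0_{K×K}, I_{K(M−1)}}
    (Dg : Matrix (Fin M × Fin K) (Fin M × Fin K) ℝ)
    (hDg : Dg = Matrix.of fun (x y : Fin M × Fin K) =>
      if x = y ∧ x.1.val ≠ 0 then (1 : ℝ) else 0)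
    -- the matrix S, indexed by the last M−1 block indices
    (S : Matrix ({l : Fin M // l.val ≠ 0} × Fin K) ({l : Fin M // l.val ≠ 0} × Fin K) ℝ)
    (hS : S = Matrix.of fun x y =>
      (Hᵀ * (Matrix.diagonal (lam (⟨0, by omega⟩ : Fin M)))⁻¹ * H) x.2 y.2 +
        (if x.1 = y.1 then (Hᵀ * (Matrix.diagonal (lam x.1.1))⁻¹ * H) x.2 y.2 else 0))
    -- the block matrix [[0, 0], [0, S]] written on the full index set
    (R : Matrix (Fin M × Fin K) (Fin M × Fin K) ℝ)
    (hR : R = Matrix.of fun (x y : Fin M × Fin K) =>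
      if x.1.val = 0 ∨ y.1.val = 0 then (0 : ℝ)
      else (Hᵀ * (Matrix.diagonal (lam (⟨0, by omega⟩ : Fin M)))⁻¹ * H) x.2 y.2 +
        (if x.1 = y.1 then (Hᵀ * (Matrix.diagonal (lam x.1))⁻¹ * H) x.2 y.2 else 0)) :
    A₀ * Dg = R ∧ S.PosDef := by
  set l₀ : Fin M := ⟨0, by omega⟩
  have hl₀ (l : Fin M) : l.val = 0 ↔ l = l₀ := by simp [Fin.ext_iff, l₀]
  set G : Fin M → Matrix (Fin K) (Fin K) ℝ := fun l => Hᵀ * (diagonal (lam l))⁻¹ * H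
  have hΛ (l : Fin M) : (diagonal (lam l)).PosDef := PosDef.diagonal (hpos l)
  have hG (l : Fin M) : (G l).PosDef := (hΛ l).inv.transpose_mul_mul_of_isUnit hH
  have hCsum : ∑ l, C l = 1 := by
    simp [hC, ← Finset.sum_mul, ← Finset.mul_sum, hsum, nonsing_inv_mul _ hH]
  have hCG (l : Fin M) : (C l)ᵀ * G l = Hᵀ * H := by
    rw [hC]
    exact transpose_similar_mul_congr_inv hH ((isUnit_iff_isUnit_det _).mp (hΛ l).isUnit)
      (diagonal_transpose _)
  have hP' : P = comp _ _ _ _ _ (blocksP l₀ C) := by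
    ext; simp [hP, blocksP, hl₀, Matrix.ite_apply, one_apply, ite_and]
  have hAtil' : Atil = comp _ _ _ _ _ (diagonal G) := by
    ext; simp [hAtil, diagonal_apply, Matrix.ite_apply, G]
  have hDg' : Dg = comp _ _ _ _ _ (diagonal fun l => if l = l₀ then 0 else 1) := by
    ext x y
    simp only [hDg, comp_apply, of_apply, diagonal_apply, Matrix.ite_apply, one_apply,
      Matrix.zero_apply, Prod.ext_iff]
    split_ifs <;> simp_all
  have hR' : R = comp _ _ _ _ _
      (of fun l m => if l = l₀ ∨ m = l₀ then 0 else G l₀ + if l = m then G l else 0) := by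
    ext; simp [hR, hl₀, Matrix.ite_apply, G]
  have hS' : S = (G l₀).submatrix Prod.snd Prod.snd +
      comp _ _ _ _ _ (diagonal fun l : {l : Fin M // l.val ≠ 0} => G l) := by
    ext; simp [hS, diagonal_apply, Matrix.ite_apply, G]
  constructor
  · rw [hA₀, hP', hAtil', hDg', hR', symmetrizer_mul_projection l₀ hCsum hCG]
  · rw [hS']
    exact PosDef.posSemidef_add ((hG l₀).posSemidef.submatrix Prod.snd)
      (posDef_comp_diagonal fun l => hG l)
end
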